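/- arXiv:1606.07034 — 2 statements merged into one kernel-verified Lean document; each statement's English description precedes it below -/
import Mathlib

section
/- Let μ be a probability measure and f, g square-integrable functions. Then the covariance satisfies μ(f²; g) ≤ c̃·(μ(f²))^{1/2}·( μ( |f − μf|²·(g² + μ(g²)) ) )^{1/2} for a universal constant c̃ ≥ 1, where μ(f²; g) := μ(f²·g) − μ(f²)·μ(g). -/
/-!
Subtracting the constant `(μf)²` from `f²` does not change the covariance with `g`, so
`μ(f²; g) = μ[(f + μf) · (f - μf)(g - μg)]`. Cauchy–Schwarz splits
this into `μ[(f + μf)²] = μ(f²) + 3(μf)² ≤ 4 μ(f²)` and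
`μ[(f - μf)²(g - μg)²] ≤ 2 μ(|f - μf|²(g² + μ(g²)))`,
both by Jensen's `(μh)² ≤ μ(h²)`; this gives `c̃ = √8`.
-/

open MeasureTheory ProbabilityTheory

section

variable {Ω : Type*} [MeasurableSpace Ω] {μ : Measure Ω}

theorem integral_mul_le_sqrt_mul_sqrt {u v : Ω → ℝ} (hu : MemLp u 2 μ) (hv : MemLp v 2 μ) :
    ∫ x, u x * v x ∂μ ≤ √(∫ x, u x ^ 2 ∂μ) * √(∫ x, v x ^ 2 ∂μ) := by
  have hp : ENNReal.ofReal 2 = 2 := by norm_num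
  have holder := integral_mul_le_Lp_mul_Lq_of_nonneg (μ := μ) Real.HolderConjugate.two_two
    (.of_forall fun x => abs_nonneg (u x)) (.of_forall fun x => abs_nonneg (v x))
    (hp ▸ hu.abs) (hp ▸ hv.abs)
  simp only [Real.rpow_two, sq_abs, ← Real.sqrt_eq_rpow] at holder
  calc ∫ x, u x * v x ∂μ ≤ |∫ x, u x * v x ∂μ| := le_abs_self _
    _ ≤ ∫ x, |u x * v x| ∂μ := abs_integral_le_integral_abs
    _ = ∫ x, |u x| * |v x| ∂μ := by simp only [abs_mul]
    _ ≤ _ := holder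

theorem sq_integral_le_integral_sq [IsProbabilityMeasure μ] {f : Ω → ℝ} (hf : MemLp f 2 μ) :
    (∫ x, f x ∂μ) ^ 2 ≤ ∫ x, f x ^ 2 ∂μ := by
  have := variance_eq_sub hf ▸ variance_nonneg f μ
  simpa only [Pi.pow_apply, sub_nonneg] using this

theorem integral_sq_add_integral_le [IsProbabilityMeasure μ] {f : Ω → ℝ} (hf : MemLp f 2 μ) :
    ∫ x, (f x + ∫ y, f y ∂μ) ^ 2 ∂μ ≤ 4 * ∫ x, f x ^ 2 ∂μ := by
  set m := ∫ y, f y ∂μ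
  have hf1 : Integrable f μ := hf.integrable one_le_two
  have hexpand : ∫ x, (f x + m) ^ 2 ∂μ = ∫ x, f x ^ 2 ∂μ + 3 * m ^ 2 := by
    have hlin : Integrable (fun x => 2 * f x * m) μ := (hf1.const_mul 2).mul_const m
    simp_rw [add_sq]
    rw [integral_add (hf.integrable_sq.fun_add hlin) (integrable_const _),
      integral_add hf.integrable_sq hlin, integral_mul_const,
      integral_const_mul, integral_const]
    simp only [probReal_univ, smul_eq_mul]
    ring
  linarith [sq_integral_le_integral_sq hf]

theorem integral_mul_sub_integral_mul_integral [IsProbabilityMeasure μ] {h g : Ω → ℝ}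
    (hh : Integrable h μ) (hg : Integrable g μ) (hhg : Integrable (fun x => h x * g x) μ) (c : ℝ) :
    ∫ x, h x * g x ∂μ - (∫ x, h x ∂μ) * ∫ x, g x ∂μ =
      ∫ x, (h x - c) * (g x - ∫ y, g y ∂μ) ∂μ := by
  have hexpand : ∀ x, (h x - c) * (g x - ∫ y, g y ∂μ) =
      (h x * g x - h x * ∫ y, g y ∂μ) - c * (g x - ∫ y, g y ∂μ) := fun x => by ring
  simp_rw [hexpand]
  rw [integral_sub (hhg.sub' (hh.mul_const _)) ((hg.sub' (integrable_const _)).const_mul c),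
    integral_sub hhg (hh.mul_const _), integral_const_mul, integral_sub hg (integrable_const _),
    integral_mul_const, integral_const]
  simp only [probReal_univ, one_smul, sub_self, mul_zero, sub_zero]

theorem sub_sq_le_two_mul_sq_add {a b c : ℝ} (h : b ^ 2 ≤ c) : (a - b) ^ 2 ≤ 2 * (a ^ 2 + c) := by
  nlinarith [sq_nonneg (a + b)]

theorem memLp_two_of_sq_le {v w : Ω → ℝ} (hv : AEStronglyMeasurable v μ) (hw : Integrable w μ)
    (h : ∀ x, v x ^ 2 ≤ w x) : MemLp v 2 μ :=
  (memLp_two_iff_integrable_sq hv).2 <| hw.mono' (hv.pow 2) <|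
    .of_forall fun x => by simpa only [Real.norm_eq_abs, abs_pow, sq_abs] using h x

end

/-- Covariance estimate: there is a universal constant `c̃ ≥ 1` such that for any
probability measure `μ` and square-integrable `f, g`,
`μ(f²; g) ≤ c̃ (μ f²)^{1/2} ( μ(|f - μf|² (g² + μ g²)) )^{1/2}`. -/
theorem covariance_bound :
    ∃ c : ℝ, 1 ≤ c ∧
      ∀ (α : Type) (_ : MeasurableSpace α) (μ : Measure α),
        IsProbabilityMeasure μ → ∀ f g : α → ℝ,
        Integrable f μ → Integrable (fun x => (f x) ^ 2) μ →
        Integrable g μ → Integrable (fun x => (g x) ^ 2) μ →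
        Integrable (fun x => (f x) ^ 2 * g x) μ →
        Integrable
          (fun x => (f x - ∫ y, f y ∂μ) ^ 2 * ((g x) ^ 2 + ∫ y, (g y) ^ 2 ∂μ)) μ →
        (∫ x, (f x) ^ 2 * g x ∂μ) - (∫ x, (f x) ^ 2 ∂μ) * (∫ x, g x ∂μ) ≤
          c * Real.sqrt (∫ x, (f x) ^ 2 ∂μ) *
            Real.sqrt
              (∫ x, (f x - ∫ y, f y ∂μ) ^ 2 * ((g x) ^ 2 + ∫ y, (g y) ^ 2 ∂μ) ∂μ) := by
  refine ⟨√8, Real.one_le_sqrt.2 (by norm_num), ?_⟩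
  intro α _ μ _ f g hf hf2 hg hg2 hf2g hW
  set m := ∫ y, f y ∂μ
  set mg := ∫ y, g y ∂μ
  set W := fun x => (f x - m) ^ 2 * (g x ^ 2 + ∫ y, g y ^ 2 ∂μ)
  have hfL2 : MemLp f 2 μ := (memLp_two_iff_integrable_sq hf.1).2 hf2
  have hgL2 : MemLp g 2 μ := (memLp_two_iff_integrable_sq hg.1).2 hg2
  have hv : ∀ x, ((f x - m) * (g x - mg)) ^ 2 ≤ 2 * W x := fun x => by
    rw [mul_pow, mul_left_comm]
    exact mul_le_mul_of_nonneg_left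
      (sub_sq_le_two_mul_sq_add (sq_integral_le_integral_sq hgL2)) (sq_nonneg _)
  have hvL2 : MemLp (fun x => (f x - m) * (g x - mg)) 2 μ :=
    memLp_two_of_sq_le (by fun_prop) (hW.const_mul 2) hv
  rw [integral_mul_sub_integral_mul_integral hf2 hg hf2g (m ^ 2)]
  calc ∫ x, (f x ^ 2 - m ^ 2) * (g x - mg) ∂μ
      = ∫ x, (f x + m) * ((f x - m) * (g x - mg)) ∂μ := by congr 1; ext x; ring
    _ ≤ √(∫ x, (f x + m) ^ 2 ∂μ) * √(∫ x, ((f x - m) * (g x - mg)) ^ 2 ∂μ) :=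
      integral_mul_le_sqrt_mul_sqrt (hfL2.add (memLp_const m)) hvL2
    _ ≤ √(4 * ∫ x, f x ^ 2 ∂μ) * √(2 * ∫ x, W x ∂μ) := by
      gcongr
      · exact integral_sq_add_integral_le hfL2
      · exact (integral_mono hvL2.integrable_sq (hW.const_mul 2) hv).trans_eq
          (integral_const_mul 2 W)
    _ = √8 * √(∫ x, f x ^ 2 ∂μ) * √(∫ x, W x ∂μ) := by
      rw [Real.sqrt_mul (by norm_num), Real.sqrt_mul (by norm_num),
        show (8 : ℝ) = 4 * 2 by norm_num, Real.sqrt_mul (by norm_num)]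
      ring
end

section
/- Let E be a probability expectation. For any nonnegative f with f log f integrable, there exists a constant A > 0 (independent of f) such that Ent_E(f²) ≤ A·E(f − E f)² + Ent_E((f − Ef)²), where Ent_E(g) = E(g·log(g/E g)). -/
open MeasureTheory ProbabilityTheory Real

/-!
Write `f = a + g` with `a = E f`, so that `E g = 0`, `E g² = b` and `E f² = a² + b`, and let
`ψ p = p² log p²`. Both entropies equal `E[h log h] - (E h) log (E h)`, so it suffices to bound
`ψ (a + g) - ψ g` pointwise by `ψ a + ψ' a · g + b + (6 + log (E f²) - log b) · g²`, whose
expectation is at most `7 b + (E f²) log (E f²) - b log b`. The Taylor expansion of `ψ` at `a`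
has remainder at most `g² (4 + log M²)` for any `M ≥ a, a + g`. For `g ≤ a` take `M = 2a`
and control the singular term `-ψ g` by the tangent line of `u ↦ u log u` at `b`; for `g > a`
take `M = 2g`, so that the remainder itself absorbs `ψ g`.
-/

lemma add_mul_log_sub_le_mul_log {u y : ℝ} (hu : 0 ≤ u) (hy : 0 < y) :
    u + u * log y - y ≤ u * log u := by
  rcases hu.eq_or_lt with rfl | hu
  · simpa using hy.le
  · have h := mul_le_mul_of_nonneg_left (log_le_sub_one_of_pos (div_pos hy hu)) hu.le
    rw [log_div hy.ne' hu.ne', mul_sub_one, mul_div_cancel₀ _ hu.ne'] at h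
    linarith

lemma log_sq_two_mul_le (x : ℝ) : log ((2 * x) ^ 2) ≤ 2 + log (x ^ 2) := by
  rcases eq_or_ne x 0 with rfl | hx
  · simp
  have h2 : log 2 ≤ 1 := by linarith [log_le_sub_one_of_pos two_pos]
  rw [mul_pow, log_mul (by norm_num) (by positivity), log_pow]
  push_cast
  linarith

lemma sq_mul_log_sq_le_taylor {a p M : ℝ} (ha : 0 < a) (hp : 0 ≤ p) (hpM : p ≤ M)
    (haM : a ≤ M) :
    p ^ 2 * log (p ^ 2) ≤ a ^ 2 * log (a ^ 2) + 2 * a * (1 + log (a ^ 2)) * (p - a)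
      + (p - a) ^ 2 * (4 + log (M ^ 2)) := by
  have haM' : log (a ^ 2) ≤ log (M ^ 2) := log_le_log (by positivity) (by gcongr)
  suffices p ^ 2 * (log (p ^ 2) - log (a ^ 2)) ≤
      2 * a * (p - a) + (p - a) ^ 2 * (4 + (log (M ^ 2) - log (a ^ 2))) by linarith
  rcases lt_or_ge p (a / 2) with hpa | hpa
  · have hneg : p ^ 2 * (log (p ^ 2) - log (a ^ 2)) ≤ 0 := by
      rcases hp.eq_or_lt with rfl | hp
      · simp
      · exact mul_nonpos_of_nonneg_of_nonpos (sq_nonneg p)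
          (sub_nonpos.2 (log_le_log (by positivity) (by nlinarith)))
    nlinarith [mul_nonneg (sq_nonneg (p - a)) (sub_nonneg.2 haM')]
  · have hp : 0 < p := by linarith
    have hpM' : log (p ^ 2) ≤ log (M ^ 2) := log_le_log (by positivity) (by gcongr)
    have hlin : a * (log (p ^ 2) - log (a ^ 2)) ≤ 2 * (p - a) := by
      have h := mul_le_mul_of_nonneg_left (log_le_sub_one_of_pos (div_pos hp ha)) ha.le
      rw [log_div hp.ne' ha.ne', mul_sub_one, mul_div_cancel₀ _ ha.ne'] at h
      simp only [log_pow]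
      push_cast
      linarith
    have hsplit : p ^ 2 * (log (p ^ 2) - log (a ^ 2)) =
        (p - a) ^ 2 * (log (p ^ 2) - log (a ^ 2))
          + (2 * p - a) * (a * (log (p ^ 2) - log (a ^ 2))) := by
      ring
    nlinarith [mul_le_mul_of_nonneg_left hlin (by linarith : (0 : ℝ) ≤ 2 * p - a),
      mul_le_mul_of_nonneg_left (sub_le_sub_right hpM' (log (a ^ 2))) (sq_nonneg (p - a))]

lemma rothaus_pointwise {a b t s : ℝ} (ha : 0 ≤ a) (hb : 0 < b) (hat : a ^ 2 ≤ t) (hbt : b ≤ t)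
    (hs : 0 ≤ a + s) :
    (a + s) ^ 2 * log ((a + s) ^ 2) - s ^ 2 * log (s ^ 2) ≤
      a ^ 2 * log (a ^ 2) + b + 2 * a * (1 + log (a ^ 2)) * s + (6 + log t - log b) * s ^ 2 := by
  have hbt' : log b ≤ log t := log_le_log hb hbt
  rcases ha.eq_or_lt with rfl | ha
  · rw [zero_add]
    nlinarith [mul_nonneg (sq_nonneg s) (sub_nonneg.2 hbt')]
  have hat' : log (a ^ 2) ≤ log t := log_le_log (by positivity) hat
  rcases le_or_gt s a with hsa | hsa
  · have hT := sq_mul_log_sq_le_taylor ha hs (by linarith : a + s ≤ 2 * a) (by linarith)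
    rw [add_sub_cancel_left] at hT
    nlinarith [add_mul_log_sub_le_mul_log (sq_nonneg s) hb,
      mul_le_mul_of_nonneg_left ((log_sq_two_mul_le a).trans (by linarith :
        2 + log (a ^ 2) ≤ 2 + log t)) (sq_nonneg s)]
  · have hT := sq_mul_log_sq_le_taylor ha hs (by linarith : a + s ≤ 2 * s) (by linarith)
    rw [add_sub_cancel_left] at hT
    nlinarith [mul_le_mul_of_nonneg_left (log_sq_two_mul_le s) (sq_nonneg s),
      mul_nonneg (sq_nonneg s) (sub_nonneg.2 hbt')]

section Integrals

variable {α : Type*} [MeasurableSpace α] {μ : Measure α}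

lemma integral_mul_log_div_integral {h : α → ℝ} (h0 : 0 ≤ h) (hi : Integrable h μ)
    (hl : Integrable (fun x => h x * log (h x)) μ) :
    ∫ x, h x * log (h x / ∫ y, h y ∂μ) ∂μ =
      ∫ x, h x * log (h x) ∂μ - (∫ x, h x ∂μ) * log (∫ x, h x ∂μ) := by
  rcases (integral_nonneg h0).eq_or_lt with hc | hc
  · have hz : h =ᵐ[μ] 0 := (integral_eq_zero_iff_of_nonneg h0 hi).1 hc.symm
    rw [← hc, integral_eq_zero_of_ae (by filter_upwards [hz] with x hx; simp [hx]),
      integral_eq_zero_of_ae (by filter_upwards [hz] with x hx; simp [hx])]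
    simp
  · have hpt : ∀ x, h x * log (h x / ∫ y, h y ∂μ) =
        h x * log (h x) - h x * log (∫ y, h y ∂μ) := by
      intro x
      rcases eq_or_ne (h x) 0 with hx | hx
      · simp [hx]
      · rw [log_div hx hc.ne', mul_sub]
    simp_rw [hpt]
    rw [integral_sub hl (hi.mul_const _), integral_mul_const]

lemma integral_sq_eq_sq_integral_add_integral_sub_sq [IsProbabilityMeasure μ] {f : α → ℝ}
    (hf : MemLp f 2 μ) :
    ∫ x, f x ^ 2 ∂μ = (∫ x, f x ∂μ) ^ 2 + ∫ x, (f x - ∫ y, f y ∂μ) ^ 2 ∂μ := by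
  rw [← variance_eq_integral hf.aemeasurable, variance_eq_sub hf]
  simp

lemma rothaus_integral_bound [IsProbabilityMeasure μ] {f : α → ℝ} (hf0 : 0 ≤ f)
    (hf : MemLp f 2 μ) (hψf : Integrable (fun x => f x ^ 2 * log (f x ^ 2)) μ)
    (hψg : Integrable (fun x => (f x - ∫ y, f y ∂μ) ^ 2 * log ((f x - ∫ y, f y ∂μ) ^ 2)) μ) :
    ∫ x, f x ^ 2 * log (f x ^ 2) ∂μ
        - ∫ x, (f x - ∫ y, f y ∂μ) ^ 2 * log ((f x - ∫ y, f y ∂μ) ^ 2) ∂μ ≤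
      7 * ∫ x, (f x - ∫ y, f y ∂μ) ^ 2 ∂μ + (∫ x, f x ^ 2 ∂μ) * log (∫ x, f x ^ 2 ∂μ)
        - (∫ x, (f x - ∫ y, f y ∂μ) ^ 2 ∂μ) * log (∫ x, (f x - ∫ y, f y ∂μ) ^ 2 ∂μ) := by
  set a := ∫ y, f y ∂μ
  set b := ∫ x, (f x - a) ^ 2 ∂μ
  set t := ∫ x, f x ^ 2 ∂μ
  have ht : t = a ^ 2 + b := integral_sq_eq_sq_integral_add_integral_sub_sq hf
  have hg : Integrable (fun x => f x - a) μ := (hf.integrable one_le_two).sub (integrable_const a)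
  have hg2 : Integrable (fun x => (f x - a) ^ 2) μ := (hf.sub (memLp_const a)).integrable_sq
  have hmean : ∫ x, (f x - a) ∂μ = 0 := by
    simp [integral_sub (hf.integrable one_le_two) (integrable_const a), a]
  have ha : 0 ≤ a := integral_nonneg hf0
  have hb : 0 ≤ b := integral_nonneg fun x => sq_nonneg _
  have hbound : ∀ᵐ x ∂μ, f x ^ 2 * log (f x ^ 2) - (f x - a) ^ 2 * log ((f x - a) ^ 2) ≤
      a ^ 2 * log (a ^ 2) + b + 2 * a * (1 + log (a ^ 2)) * (f x - a)
        + (6 + log t - log b) * (f x - a) ^ 2 := by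
    rcases hb.eq_or_lt with hb0 | hb0
    · have hz : (fun x => (f x - a) ^ 2) =ᵐ[μ] 0 :=
        (integral_eq_zero_iff_of_nonneg (fun x => sq_nonneg _) hg2).1 hb0.symm
      filter_upwards [hz] with x hx
      have hfx : f x = a := by simpa [sub_eq_zero] using hx
      simp [hfx, ← hb0]
    · refine .of_forall fun x => ?_
      simpa using rothaus_pointwise (s := f x - a) (t := t) ha hb0
        (by linarith) (by linarith [sq_nonneg a]) (by simpa using hf0 x)
  have hint : ∫ x, (f x ^ 2 * log (f x ^ 2) - (f x - a) ^ 2 * log ((f x - a) ^ 2)) ∂μ ≤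
      ∫ x, (a ^ 2 * log (a ^ 2) + b + 2 * a * (1 + log (a ^ 2)) * (f x - a)
        + (6 + log t - log b) * (f x - a) ^ 2) ∂μ :=
    integral_mono_ae (hψf.sub hψg) (by fun_prop) hbound
  rw [integral_sub hψf hψg, integral_add (by fun_prop) (by fun_prop),
    integral_add (by fun_prop) (by fun_prop), integral_const, integral_const_mul,
    integral_const_mul, hmean] at hint
  have hlog : a ^ 2 * log (a ^ 2) ≤ a ^ 2 * log t := by
    rcases eq_or_ne a 0 with ha0 | ha0
    · simp [ha0]
    · exact mul_le_mul_of_nonneg_left (log_le_log (by positivity) (by linarith)) (sq_nonneg a)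
  simp only [probReal_univ, smul_eq_mul, one_mul, mul_zero, add_zero] at hint
  rw [ht] at hint hlog ⊢
  linarith

end Integrals

/-- Rothaus-type entropy bound: there is a constant `A > 0` (independent of `f`) such
that `Ent_E(f²) ≤ A·E(f − Ef)² + Ent_E((f − Ef)²)`, where
`Ent_E(g) = E(g log(g/Eg))`. -/
theorem rothaus_entropy_bound :
    ∃ A : ℝ, 0 < A ∧
      ∀ (α : Type) (_ : MeasurableSpace α) (μ : Measure α),
        IsProbabilityMeasure μ → ∀ f : α → ℝ, (∀ x, 0 ≤ f x) →
        Integrable f μ → Integrable (fun x => (f x) ^ 2) μ →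
        Integrable (fun x => (f x) ^ 2 * Real.log ((f x) ^ 2)) μ →
        Integrable (fun x => (f x - ∫ y, f y ∂μ) ^ 2 *
          Real.log ((f x - ∫ y, f y ∂μ) ^ 2)) μ →
        ∫ x, (f x) ^ 2 * Real.log ((f x) ^ 2 / ∫ y, (f y) ^ 2 ∂μ) ∂μ ≤
          A * (∫ x, (f x - ∫ y, f y ∂μ) ^ 2 ∂μ) +
            ∫ x, (f x - ∫ y, f y ∂μ) ^ 2 *
              Real.log ((f x - ∫ y, f y ∂μ) ^ 2 /
                ∫ z, (f z - ∫ y, f y ∂μ) ^ 2 ∂μ) ∂μ := by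
  refine ⟨7, by norm_num, fun α _ μ _ f hf0 hf hf2 hψf hψg => ?_⟩
  have hL2 : MemLp f 2 μ := (memLp_two_iff_integrable_sq hf.aestronglyMeasurable).2 hf2
  have hg2 : Integrable (fun x => (f x - ∫ y, f y ∂μ) ^ 2) μ :=
    (hL2.sub (memLp_const _)).integrable_sq
  rw [integral_mul_log_div_integral (fun x => sq_nonneg _) hf2 hψf,
    integral_mul_log_div_integral (fun x => sq_nonneg _) hg2 hψg]
  linarith [rothaus_integral_bound hf0 hL2 hψf hψg]
end
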